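/- arXiv:1605.02659 — 4 statements merged into one kernel-verified Lean document; each statement's English description precedes it below -/
import Mathlib

section
/- Let L : [0,∞) → [0,∞) be a strictly increasing continuous function, slowly varying at +∞, with L(0) = 0 and lim_{x→∞} L(x) = +∞, and let L⁻ denote its inverse. Then for all 0 < a < b, lim_{t→∞} L⁻(ta)/L⁻(tb) = 0. -/
open Filter Set Topology

/-
Put `y = L⁻(tb)`, so `y → ∞` and `L y = tb`. Slow variation at `λ = ε` gives
`L(εy) / L(y) → 1 > a/b` and hence `L(εy) > ta`, i.e. `L⁻(ta) < εy = ε L⁻(tb)` for large `t`.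
-/

theorem StrictMonoOn.lt_iff_lt_apply_of_rightInvOn {α β : Type*} [LinearOrder α]
    [LinearOrder β] {L : α → β} {Linv : β → α} {s : Set α} {t : Set β}
    (hmono : StrictMonoOn L s) (hmaps : MapsTo Linv t s) (hinv : RightInvOn Linv L t)
    {x : α} {y : β} (hx : x ∈ s) (hy : y ∈ t) : Linv y < x ↔ y < L x := by
  rw [← hmono.lt_iff_lt (hmaps hy) hx, hinv hy]

theorem StrictMonoOn.tendsto_atTop_of_rightInvOn {L Linv : ℝ → ℝ}
    (hmono : StrictMonoOn L (Ici 0)) (hmaps : MapsTo Linv (Ici 0) (Ici 0))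
    (hinv : RightInvOn Linv L (Ici 0)) : Tendsto Linv atTop atTop := by
  refine tendsto_atTop_atTop.2 fun M => ⟨max (L (max M 0)) 0, fun y hy => ?_⟩
  have hM : max M 0 ≤ Linv y := not_lt.1 fun h => (le_of_max_le_left hy).not_gt <|
    (hmono.lt_iff_lt_apply_of_rightInvOn hmaps hinv (le_max_right M 0)
      (le_of_max_le_right hy)).1 h
  exact (le_max_left M 0).trans hM

theorem stmt1_general (L Linv : ℝ → ℝ)
    (hmono : StrictMonoOn L (Ici 0))
    (hslow : ∀ c > (0:ℝ), Tendsto (fun x => L (c * x) / L x) atTop (𝓝 1))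
    (hInvnonneg : ∀ y ≥ 0, 0 ≤ Linv y)
    (hinv₂ : ∀ y ≥ 0, L (Linv y) = y)
    (a b : ℝ) (ha : 0 < a) (hab : a < b) :
    Tendsto (fun t => Linv (t * a) / Linv (t * b)) atTop (𝓝 0) := by
  have hb : 0 < b := ha.trans hab
  have hmaps : MapsTo Linv (Ici 0) (Ici 0) := hInvnonneg
  have hinv : RightInvOn Linv L (Ici 0) := hinv₂
  have hInvtop : Tendsto (fun t => Linv (t * b)) atTop atTop :=
    (hmono.tendsto_atTop_of_rightInvOn hmaps hinv).comp (tendsto_id.atTop_mul_const hb)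
  refine tendsto_order.2 ⟨fun δ hδ => ?_, fun ε hε => ?_⟩
  · filter_upwards [eventually_ge_atTop 0] with t ht
    exact hδ.trans_le (div_nonneg (hInvnonneg _ (by positivity)) (hInvnonneg _ (by positivity)))
  have hratio : ∀ᶠ x in atTop, a / b < L (ε * x) / L x :=
    (hslow ε hε).eventually (eventually_gt_nhds ((div_lt_one hb).2 hab))
  filter_upwards [hInvtop.eventually hratio, hInvtop.eventually_gt_atTop 0,
    eventually_gt_atTop 0] with t hratio_t hpos ht
  have htb : 0 < t * b := by positivity
  rw [hinv₂ _ htb.le, div_lt_div_iff₀ hb htb] at hratio_t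
  rw [div_lt_iff₀ hpos]
  exact (hmono.lt_iff_lt_apply_of_rightInvOn hmaps hinv
    (mul_nonneg hε.le hpos.le) (by positivity : (0:ℝ) ≤ t * a)).2 (by nlinarith)

/-- If `L` is a strictly increasing continuous slowly varying function on `[0,∞)` with
`L 0 = 0` and `L(∞) = ∞`, and `Linv` is its inverse, then `Linv (t*a) / Linv (t*b) → 0`
as `t → ∞`, for all `0 < a < b`. -/
theorem stmt1 (L Linv : ℝ → ℝ)
    (hmono : StrictMonoOn L (Ici 0)) (hcont : ContinuousOn L (Ici 0))
    (hL0 : L 0 = 0) (htop : Tendsto L atTop atTop)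
    (hslow : ∀ c > (0:ℝ), Tendsto (fun x => L (c * x) / L x) atTop (𝓝 1))
    (hLnonneg : ∀ x ≥ 0, 0 ≤ L x) (hInvnonneg : ∀ y ≥ 0, 0 ≤ Linv y)
    (hinv₁ : ∀ x ≥ 0, Linv (L x) = x) (hinv₂ : ∀ y ≥ 0, L (Linv y) = y)
    (a b : ℝ) (ha : 0 < a) (hab : a < b) :
    Tendsto (fun t => Linv (t * a) / Linv (t * b)) atTop (𝓝 0) :=
  stmt1_general L Linv hmono hslow hInvnonneg hinv₂ a b ha hab
end

section
/- Let L : [0,∞) → [0,∞) be a strictly increasing continuous function, slowly varying at +∞, with L(0) = 0 and lim_{x→∞} L(x) = +∞, and inverse L⁻. Then for every u > 0 and ε ∈ (0,u), lim_{t→∞} sup_{y ∈ [0, u−ε]} | (L⁻(tu) − L⁻(ty))/L⁻(tu) − 1 | = 0. -/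
open Filter Set Topology

/-!
Since `L(δ x)/L(x) → 1` for each `δ > 0`, putting `x = L⁻(s)` gives `L(δ L⁻(s)) / s → 1`, so for
`ρ < 1` eventually `ρ s < L(δ L⁻(s))`, i.e. `L⁻(ρ s) < δ L⁻(s)`: the inverse of a slowly varying
function satisfies `L⁻(ρ s)/L⁻(s) → 0`. The quantity under the supremum is `L⁻(ty)/L⁻(tu)`,
which by monotonicity is at most `L⁻(t(u-ε))/L⁻(tu)`, and this tends to `0` with `ρ = (u-ε)/u`.
-/

section RightInverse

variable {L Linv : ℝ → ℝ}

theorem le_rightInv_iff (hL : StrictMonoOn L (Ici 0)) (hLinv_nonneg : ∀ y ≥ 0, 0 ≤ Linv y)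
    (hLinv : ∀ y ≥ 0, L (Linv y) = y) {x y : ℝ} (hx : 0 ≤ x) (hy : 0 ≤ y) :
    x ≤ Linv y ↔ L x ≤ y := by
  conv_rhs => rw [← hLinv y hy]
  exact (hL.le_iff_le hx (hLinv_nonneg y hy)).symm

theorem rightInv_lt_iff (hL : StrictMonoOn L (Ici 0)) (hLinv_nonneg : ∀ y ≥ 0, 0 ≤ Linv y)
    (hLinv : ∀ y ≥ 0, L (Linv y) = y) {x y : ℝ} (hx : 0 ≤ x) (hy : 0 ≤ y) :
    Linv y < x ↔ y < L x :=
  not_iff_not.mp <| by simpa only [not_lt] using le_rightInv_iff hL hLinv_nonneg hLinv hx hy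

theorem monotoneOn_rightInv (hL : StrictMonoOn L (Ici 0)) (hLinv_nonneg : ∀ y ≥ 0, 0 ≤ Linv y)
    (hLinv : ∀ y ≥ 0, L (Linv y) = y) : MonotoneOn Linv (Ici 0) := by
  intro a ha b hb hab
  rw [le_rightInv_iff hL hLinv_nonneg hLinv (hLinv_nonneg a ha) hb, hLinv a ha]
  exact hab

theorem tendsto_rightInv_atTop (hL : StrictMonoOn L (Ici 0))
    (hLinv_nonneg : ∀ y ≥ 0, 0 ≤ Linv y) (hLinv : ∀ y ≥ 0, L (Linv y) = y) :
    Tendsto Linv atTop atTop := by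
  refine tendsto_atTop.2 fun b => ?_
  filter_upwards [eventually_ge_atTop (max (L (max b 0)) 0)] with y hy
  exact (le_max_left b 0).trans <| (le_rightInv_iff hL hLinv_nonneg hLinv (le_max_right b 0)
    (le_of_max_le_right hy)).2 (le_of_max_le_left hy)

theorem tendsto_rightInv_const_mul_div_rightInv_zero (hL : StrictMonoOn L (Ici 0))
    (hslow : ∀ c > (0:ℝ), Tendsto (fun x => L (c * x) / L x) atTop (𝓝 1))
    (hLinv_nonneg : ∀ y ≥ 0, 0 ≤ Linv y) (hLinv : ∀ y ≥ 0, L (Linv y) = y)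
    {ρ : ℝ} (hρ0 : 0 ≤ ρ) (hρ1 : ρ < 1) :
    Tendsto (fun s => Linv (ρ * s) / Linv s) atTop (𝓝 0) := by
  have hLinv_top := tendsto_rightInv_atTop hL hLinv_nonneg hLinv
  have hpos : ∀ᶠ s in atTop, 0 < Linv s := hLinv_top.eventually_gt_atTop 0
  refine tendsto_order.2 ⟨fun a ha => ?_, fun δ hδ => ?_⟩
  · filter_upwards [hpos, eventually_ge_atTop 0] with s hs hs0
    exact ha.trans_le (div_nonneg (hLinv_nonneg _ (mul_nonneg hρ0 hs0)) hs.le)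
  · have hratio : ∀ᶠ s in atTop, ρ < L (δ * Linv s) / L (Linv s) :=
      ((hslow δ hδ).comp hLinv_top).eventually_const_lt hρ1
    filter_upwards [hratio, hpos, eventually_gt_atTop 0] with s hs hLs hs0
    rw [hLinv s hs0.le, lt_div_iff₀ hs0] at hs
    rw [div_lt_iff₀ hLs]
    exact (rightInv_lt_iff hL hLinv_nonneg hLinv (mul_nonneg hδ.le hLs.le)
      (mul_nonneg hρ0 hs0.le)).2 hs

end RightInverse

theorem abs_sub_div_sub_one {a b : ℝ} (ha : a ≠ 0) : |(a - b) / a - 1| = |b / a| := by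
  rw [sub_div, div_self ha, sub_sub_cancel_left, abs_neg]

theorem stmt2_general (L Linv : ℝ → ℝ)
    (hmono : StrictMonoOn L (Ici 0))
    (hslow : ∀ c > (0:ℝ), Tendsto (fun x => L (c * x) / L x) atTop (𝓝 1))
    (hInvnonneg : ∀ y ≥ 0, 0 ≤ Linv y)
    (hinv₂ : ∀ y ≥ 0, L (Linv y) = y)
    (u ε : ℝ) (hu : 0 < u) (hε : 0 < ε) (hεu : ε < u) :
    Tendsto (fun t => ⨆ y ∈ Icc (0:ℝ) (u - ε),
      |(Linv (t * u) - Linv (t * y)) / Linv (t * u) - 1|) atTop (𝓝 0) := by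
  have huε : 0 < u - ε := by linarith
  have hlim : Tendsto (fun t => Linv (t * (u - ε)) / Linv (t * u)) atTop (𝓝 0) := by
    refine ((tendsto_rightInv_const_mul_div_rightInv_zero hmono hslow hInvnonneg hinv₂
      (div_pos huε hu).le ((div_lt_one hu).2 (by linarith))).comp
      (tendsto_id.atTop_mul_const hu)).congr fun t => ?_
    simp only [Function.comp_apply, id]
    rw [div_mul_comm, mul_div_cancel_right₀ t hu.ne']
  have hpos : ∀ᶠ t in atTop, 0 < Linv (t * u) :=
    ((tendsto_rightInv_atTop hmono hInvnonneg hinv₂).comp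
      (tendsto_id.atTop_mul_const hu)).eventually_gt_atTop 0
  refine tendsto_of_tendsto_of_tendsto_of_le_of_le' tendsto_const_nhds hlim
    (Eventually.of_forall fun _ => Real.iSup_nonneg fun _ => Real.iSup_nonneg fun _ => abs_nonneg _)
    ?_
  filter_upwards [hpos, eventually_ge_atTop 0] with t ht ht0
  have hbound_nonneg : 0 ≤ Linv (t * (u - ε)) / Linv (t * u) :=
    div_nonneg (hInvnonneg _ (mul_nonneg ht0 huε.le)) ht.le
  refine Real.iSup_le (fun y => Real.iSup_le (fun ⟨hy0, hyu⟩ => ?_) hbound_nonneg) hbound_nonneg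
  have hty : 0 ≤ t * y := mul_nonneg ht0 hy0
  rw [abs_sub_div_sub_one ht.ne', abs_of_nonneg (div_nonneg (hInvnonneg _ hty) ht.le)]
  gcongr
  exact monotoneOn_rightInv hmono hInvnonneg hinv₂ hty (mul_nonneg ht0 huε.le)
    (mul_le_mul_of_nonneg_left hyu ht0)

/-- If `L` is a strictly increasing continuous slowly varying function on `[0,∞)` with
`L 0 = 0`, `L(∞) = ∞` and inverse `Linv`, then for every `u > 0` and `ε ∈ (0,u)`,
`sup_{y ∈ [0,u-ε]} |(Linv(tu) - Linv(ty))/Linv(tu) - 1| → 0` as `t → ∞`. -/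
theorem stmt2 (L Linv : ℝ → ℝ)
    (hmono : StrictMonoOn L (Ici 0)) (hcont : ContinuousOn L (Ici 0))
    (hL0 : L 0 = 0) (htop : Tendsto L atTop atTop)
    (hslow : ∀ c > (0:ℝ), Tendsto (fun x => L (c * x) / L x) atTop (𝓝 1))
    (hLnonneg : ∀ x ≥ 0, 0 ≤ L x) (hInvnonneg : ∀ y ≥ 0, 0 ≤ Linv y)
    (hinv₁ : ∀ x ≥ 0, Linv (L x) = x) (hinv₂ : ∀ y ≥ 0, L (Linv y) = y)
    (u ε : ℝ) (hu : 0 < u) (hε : 0 < ε) (hεu : ε < u) :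
    Tendsto (fun t => ⨆ y ∈ Icc (0:ℝ) (u - ε),
      |(Linv (t * u) - Linv (t * y)) / Linv (t * u) - 1|) atTop (𝓝 0) :=
  stmt2_general L Linv hmono hslow hInvnonneg hinv₂ u ε hu hε hεu
end

section
/- Let ξ, ξ₁, ξ₂, … be i.i.d. positive random variables and suppose P(ξ > x) ~ 1/L(x) as x → ∞ for a strictly increasing, continuous, slowly varying function L with L(0) = 0 and L(∞) = ∞. Let Sₙ = ξ₁ + … + ξₙ. Then L(Sₙ)/n converges in distribution, as n → ∞, to a random variable X with standard Fréchet distribution P(X ≤ x) = exp(−1/x), x > 0. -/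
open MeasureTheory ProbabilityTheory Set Filter Topology

/-- Partial sums `S n = ξ₁ + … + ξ_n` of the steps `ξ`. -/
def rwS {Ω : Type*} (ξ : ℕ → Ω → ℝ) (n : ℕ) (ω : Ω) : ℝ :=
  ∑ i ∈ Finset.range n, ξ i ω

/-- First-passage time `ν(t) = inf {k : S_k > t}`. -/
noncomputable def rwNu {Ω : Type*} (ξ : ℕ → Ω → ℝ) (t : ℝ) (ω : Ω) : ℕ :=
  sInf {k : ℕ | t < rwS ξ k ω}

/-!
Let `t n` solve `L (t n) = n * x`, so that `{L (S n) / n ≤ x} = {S n ≤ t n}`. Slow variation turns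
`P(ξ > y) ~ 1 / L y` into `n * P(ξ > c * t n) → 1 / x` for every `c > 0`, hence
`P(max_{k < n} ξ_k ≤ c * t n) → exp (-1 / x)`. Since `S n` dominates the maximum, `c = 1` gives the
upper bound. For the lower bound, if every `ξ_k ≤ δ * t n` but `S n > t n`, then the truncated sum
`∑ min (ξ_k) (δ * t n)` exceeds `t n`. Summing the tail over dyadic shells gives the Karamata-type
estimate `E[min ξ y] = O(y / L y)`, so by Markov's inequality this has probability `O(δ)`.
-/

def SlowlyVarying (L : ℝ → ℝ) : Prop :=
  ∀ c > (0 : ℝ), Tendsto (fun x => L (c * x) / L x) atTop (𝓝 1)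

section Growth

variable {L : ℝ → ℝ} {a q : ℝ}

lemma le_pow_mul_of_forall_le_mul (ha : 0 ≤ a) (hq : 0 ≤ q)
    (h : ∀ y ≥ a, L (2 * y) ≤ q * L y) (k : ℕ) {y : ℝ} (hy : a ≤ y) :
    L (2 ^ k * y) ≤ q ^ k * L y := by
  induction k with
  | zero => simp
  | succ k ih =>
    have hk : a ≤ 2 ^ k * y :=
      hy.trans (le_mul_of_one_le_left (ha.trans hy) (one_le_pow₀ one_le_two))
    calc L (2 ^ (k + 1) * y) = L (2 * (2 ^ k * y)) := by ring_nf
      _ ≤ q * L (2 ^ k * y) := h _ hk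
      _ ≤ q * (q ^ k * L y) := by gcongr
      _ = q ^ (k + 1) * L y := by ring

lemma exists_eq_two_pow_mul_mem_Ico (ha : 0 < a) {y : ℝ} (hy : a ≤ y) :
    ∃ k : ℕ, ∃ z ∈ Ico a (2 * a), y = 2 ^ k * z := by
  obtain ⟨k, hk₁, hk₂⟩ := exists_nat_pow_near ((one_le_div ha).2 hy) one_lt_two
  rw [le_div_iff₀ ha] at hk₁
  rw [div_lt_iff₀ ha, pow_succ] at hk₂
  refine ⟨k, y / 2 ^ k, ⟨?_, ?_⟩, by field_simp⟩
  · rw [le_div_iff₀ (by positivity)]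
    linarith
  · rw [div_lt_iff₀ (by positivity)]
    linarith

lemma le_div_mul_of_forall_le_mul (ha : 0 < a) (hq : 0 ≤ q) (hq₂ : q ≤ 2)
    (hmono : MonotoneOn L (Ici a)) (hLa : 0 ≤ L a) (h : ∀ y ≥ a, L (2 * y) ≤ q * L y)
    {y : ℝ} (hy : a ≤ y) : L y ≤ L (2 * a) / a * y := by
  obtain ⟨k, z, ⟨hz₁, hz₂⟩, rfl⟩ := exists_eq_two_pow_mul_mem_Ico ha hy
  have hLz : 0 ≤ L z := hLa.trans (hmono self_mem_Ici hz₁ hz₁)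
  have hLz₂ : L z ≤ L (2 * a) := hmono hz₁ (by simp only [mem_Ici]; linarith) hz₂.le
  calc L (2 ^ k * z) ≤ q ^ k * L z := le_pow_mul_of_forall_le_mul ha.le hq h k hz₁
    _ ≤ 2 ^ k * L (2 * a) := by gcongr
    _ = L (2 * a) / a * (2 ^ k * a) := by field_simp
    _ ≤ L (2 * a) / a * (2 ^ k * z) := by
      have : 0 ≤ L (2 * a) := hLz.trans hLz₂
      gcongr

end Growth

section TruncatedMean

variable {Ω : Type*} [MeasurableSpace Ω] {P : Measure Ω} {X : Ω → ℝ}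

lemma integrable_min_const [IsFiniteMeasure P] (hX : Measurable X) (hX₀ : ∀ ω, 0 ≤ X ω)
    {y : ℝ} (hy : 0 ≤ y) : Integrable (fun ω => min (X ω) y) P :=
  .of_bound (hX.min measurable_const).aestronglyMeasurable y <| .of_forall fun ω => by
    rw [Real.norm_of_nonneg (le_min (hX₀ ω) hy)]
    exact min_le_right _ _

lemma integral_min_le_integral_min_half_add [IsFiniteMeasure P] (hX : Measurable X)
    (hX₀ : ∀ ω, 0 ≤ X ω) {b : ℝ} (hb : 0 ≤ b) :
    ∫ ω, min (X ω) b ∂P ≤ ∫ ω, min (X ω) (b / 2) ∂P + P.real {ω | b / 2 < X ω} * b := by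
  have hs : MeasurableSet {ω | b / 2 < X ω} := hX measurableSet_Ioi
  calc ∫ ω, min (X ω) b ∂P
      ≤ ∫ ω, (min (X ω) (b / 2) + {ω | b / 2 < X ω}.indicator (fun _ => b) ω) ∂P := by
        refine integral_mono (integrable_min_const hX hX₀ hb)
          ((integrable_min_const hX hX₀ (by positivity)).add ((integrable_const b).indicator hs))
          fun ω => ?_
        by_cases h : b / 2 < X ω
        · simp only [indicator_of_mem (show ω ∈ {ω | b / 2 < X ω} from h), min_eq_right h.le]
          linarith [min_le_right (X ω) b]
        · simp only [indicator_of_notMem (show ω ∉ {ω | b / 2 < X ω} from h),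
            min_eq_left (not_lt.1 h), add_zero]
          exact min_le_left _ _
    _ = ∫ ω, min (X ω) (b / 2) ∂P + P.real {ω | b / 2 < X ω} * b := by
        rw [integral_add (integrable_min_const hX hX₀ (by positivity))
          ((integrable_const b).indicator hs), integral_indicator_const _ hs, smul_eq_mul]

lemma integral_min_le_dyadic [IsProbabilityMeasure P] (hX : Measurable X) (hX₀ : ∀ ω, 0 ≤ X ω)
    {y : ℝ} (hy : 0 ≤ y) (k : ℕ) : ∫ ω, min (X ω) y ∂P ≤
      y / 2 ^ k + ∑ j ∈ Finset.range k, P.real {ω | y / 2 ^ (j + 1) < X ω} * (y / 2 ^ j) := by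
  have hsplit : ∀ k : ℕ, ∫ ω, min (X ω) y ∂P ≤ ∫ ω, min (X ω) (y / 2 ^ k) ∂P +
      ∑ j ∈ Finset.range k, P.real {ω | y / 2 ^ (j + 1) < X ω} * (y / 2 ^ j) := by
    intro k
    induction k with
    | zero => simp
    | succ k ih =>
      have := integral_min_le_integral_min_half_add (P := P) hX hX₀ (b := y / 2 ^ k)
        (by positivity)
      rw [div_div, ← pow_succ] at this
      rw [Finset.sum_range_succ]
      linarith
  have htop : ∫ ω, min (X ω) (y / 2 ^ k) ∂P ≤ y / 2 ^ k := by
    calc ∫ ω, min (X ω) (y / 2 ^ k) ∂P ≤ ∫ _, y / 2 ^ k ∂P :=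
          integral_mono (integrable_min_const hX hX₀ (by positivity)) (integrable_const _)
            fun ω => min_le_right _ _
      _ = y / 2 ^ k := by simp
  linarith [hsplit k]

lemma integral_min_le_of_measureReal_mul_le [IsProbabilityMeasure P] (hX : Measurable X)
    (hX₀ : ∀ ω, 0 ≤ X ω) {L : ℝ → ℝ} {a q A : ℝ} (ha : 0 < a) (hq₂ : q < 2)
    (hLpos : ∀ y ≥ a, 0 < L y) (hL : ∀ y ≥ a, L (2 * y) ≤ q * L y)
    (htail : ∀ y ≥ a, P.real {ω | y < X ω} * L y ≤ A) {y : ℝ} (hy : a ≤ y) :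
    ∫ ω, min (X ω) y ∂P ≤ 2 * a + A * q / (1 - q / 2) * (y / L y) := by
  obtain ⟨k, z, ⟨hz₁, hz₂⟩, hyz⟩ := exists_eq_two_pow_mul_mem_Ico ha hy
  have hA : 0 ≤ A := (mul_nonneg measureReal_nonneg (hLpos a le_rfl).le).trans (htail a le_rfl)
  have hq : 0 ≤ q := (pos_of_mul_pos_left ((hLpos (2 * a) (by linarith)).trans_le (hL a le_rfl))
    (hLpos a le_rfl).le).le
  have hy₀ : 0 ≤ y := ha.le.trans hy
  have hLy : 0 < L y := hLpos y hy
  have hterm : ∀ j ∈ Finset.range k, P.real {ω | y / 2 ^ (j + 1) < X ω} * (y / 2 ^ j) ≤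
      A * q * (y / L y) * (q / 2) ^ j := by
    intro j hj
    set w := y / 2 ^ (j + 1)
    have hw : a ≤ w := by
      refine hz₁.trans ((le_div_iff₀ (by positivity)).2 ?_)
      rw [hyz, mul_comm]
      exact mul_le_mul_of_nonneg_right (pow_le_pow_right₀ one_le_two (Finset.mem_range.1 hj))
        (ha.le.trans hz₁)
    have hLw : L y ≤ q ^ (j + 1) * L w := by
      have := le_pow_mul_of_forall_le_mul ha.le hq hL (j + 1) hw
      rwa [show 2 ^ (j + 1) * w = y by simp only [w]; field_simp] at this
    have hpw : P.real {ω | w < X ω} * L y ≤ A * q ^ (j + 1) :=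
      calc P.real {ω | w < X ω} * L y ≤ P.real {ω | w < X ω} * (q ^ (j + 1) * L w) := by
            gcongr
        _ = q ^ (j + 1) * (P.real {ω | w < X ω} * L w) := by ring
        _ ≤ q ^ (j + 1) * A := by gcongr; exact htail w hw
        _ = A * q ^ (j + 1) := by ring
    calc P.real {ω | w < X ω} * (y / 2 ^ j)
        = P.real {ω | w < X ω} * L y * (y / 2 ^ j / L y) := by field_simp
      _ ≤ A * q ^ (j + 1) * (y / 2 ^ j / L y) :=
        mul_le_mul_of_nonneg_right hpw (div_nonneg (div_nonneg hy₀ (by positivity)) hLy.le)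
      _ = A * q * (y / L y) * (q / 2) ^ j := by rw [div_pow]; field_simp; ring
  have hgeom : ∑ j ∈ Finset.range k, (q / 2) ^ j ≤ 1 / (1 - q / 2) := by
    have := geom_sum_Ico_le_of_lt_one (m := 0) (n := k) (x := q / 2) (by positivity) (by linarith)
    rwa [← Finset.range_eq_Ico, pow_zero] at this
  calc ∫ ω, min (X ω) y ∂P
      ≤ y / 2 ^ k + ∑ j ∈ Finset.range k, P.real {ω | y / 2 ^ (j + 1) < X ω} * (y / 2 ^ j) :=
        integral_min_le_dyadic hX hX₀ hy₀ k
    _ ≤ 2 * a + ∑ j ∈ Finset.range k, A * q * (y / L y) * (q / 2) ^ j :=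
        add_le_add (by rw [hyz]; field_simp; exact hz₂.le) (Finset.sum_le_sum hterm)
    _ = 2 * a + A * q * (y / L y) * ∑ j ∈ Finset.range k, (q / 2) ^ j := by rw [Finset.mul_sum]
    _ ≤ 2 * a + A * q * (y / L y) * (1 / (1 - q / 2)) := by gcongr
    _ = 2 * a + A * q / (1 - q / 2) * (y / L y) := by ring

end TruncatedMean

section SlowVariation

variable {L : ℝ → ℝ}

lemma eventually_pos_of_tendsto_mul {p : ℝ → ℝ} (hp : ∀ y, 0 ≤ p y)
    (h : Tendsto (fun y => p y * L y) atTop (𝓝 1)) : ∀ᶠ y in atTop, 0 < L y :=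
  (h.eventually_const_lt one_pos).mono fun y hy => pos_of_mul_pos_right hy (hp y)

lemma SlowlyVarying.eventually_le_mul (hL : SlowlyVarying L) (hpos : ∀ᶠ y in atTop, 0 < L y)
    {c q : ℝ} (hc : 0 < c) (hq : 1 < q) : ∀ᶠ y in atTop, L (c * y) ≤ q * L y := by
  filter_upwards [(hL c hc).eventually_le_const hq, hpos] with y h hy
  rwa [div_le_iff₀ hy] at h

lemma SlowlyVarying.exists_integral_min_le {Ω : Type*} [MeasurableSpace Ω] {P : Measure Ω}
    [IsProbabilityMeasure P] {X : Ω → ℝ} (hL : SlowlyVarying L) (hmono : MonotoneOn L (Ici 0))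
    (hX : Measurable X) (hX₀ : ∀ ω, 0 ≤ X ω)
    (htail : Tendsto (fun y => P.real {ω | y < X ω} * L y) atTop (𝓝 1)) :
    ∃ C > 0, ∀ᶠ y in atTop, ∫ ω, min (X ω) y ∂P ≤ C * (y / L y) := by
  have hpos := eventually_pos_of_tendsto_mul (fun _ => measureReal_nonneg) htail
  obtain ⟨a₀, ha₀⟩ := eventually_atTop.1 <| hpos.and <|
    (hL.eventually_le_mul hpos two_pos (by norm_num : (1 : ℝ) < 3 / 2)).and <|
    htail.eventually_le_const one_lt_two
  set a := max a₀ 1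
  have ha : 0 < a := zero_lt_one.trans_le (le_max_right _ _)
  have h : ∀ y ≥ a, 0 < L y ∧ L (2 * y) ≤ 3 / 2 * L y ∧ P.real {ω | y < X ω} * L y ≤ 2 :=
    fun y hy => ha₀ y (le_of_max_le_left hy)
  have hLa : 0 < L (2 * a) := (h _ (by linarith)).1
  refine ⟨2 * L (2 * a) + 12, by positivity, ?_⟩
  filter_upwards [eventually_ge_atTop a] with y hy
  have hLy : 0 < L y := (h y hy).1
  have hlin : a * L y ≤ L (2 * a) * y := by
    have := le_div_mul_of_forall_le_mul ha (by norm_num) (by norm_num)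
      (hmono.mono (Ici_subset_Ici.2 ha.le)) (h a le_rfl).1.le (fun y hy => (h y hy).2.1) hy
    rwa [div_mul_eq_mul_div, le_div_iff₀ ha, mul_comm] at this
  have hmean := integral_min_le_of_measureReal_mul_le (P := P) hX hX₀ ha (by norm_num)
    (fun y hy => (h y hy).1) (fun y hy => (h y hy).2.1) (fun y hy => (h y hy).2.2) hy
  have ha_le : a ≤ L (2 * a) * (y / L y) := by
    rw [← mul_div_assoc, le_div_iff₀ hLy]; exact hlin
  -- `12 = A * q / (1 - q / 2)` for `A = 2`, `q = 3 / 2`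
  norm_num at hmean
  linarith

lemma SlowlyVarying.tendsto_natCast_div (hL : SlowlyVarying L) {t : ℕ → ℝ}
    (ht : Tendsto t atTop atTop) {x : ℝ} (hx : x ≠ 0) (htL : ∀ n, L (t n) = n * x) {c : ℝ}
    (hc : 0 < c) : Tendsto (fun n : ℕ => (n : ℝ) / L (c * t n)) atTop (𝓝 (1 / x)) := by
  have h := (((hL c hc).comp ht).inv₀ one_ne_zero).div_const x
  rw [inv_one] at h
  refine h.congr fun n => ?_
  simp only [Function.comp_apply, inv_div, htL]
  field_simp

lemma SlowlyVarying.tendsto_natCast_mul {p : ℝ → ℝ} (hL : SlowlyVarying L)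
    (hpL : Tendsto (fun y => p y * L y) atTop (𝓝 1)) (hpos : ∀ᶠ y in atTop, 0 < L y)
    {t : ℕ → ℝ} (ht : Tendsto t atTop atTop) {x : ℝ} (hx : x ≠ 0) (htL : ∀ n, L (t n) = n * x)
    {c : ℝ} (hc : 0 < c) : Tendsto (fun n : ℕ => (n : ℝ) * p (c * t n)) atTop (𝓝 (1 / x)) := by
  have hct := ht.const_mul_atTop hc
  have h := (hpL.comp hct).mul (hL.tendsto_natCast_div ht hx htL hc)
  rw [one_mul] at h
  refine h.congr' ((hct.eventually hpos).mono fun n hn => ?_)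
  simp only [Function.comp_apply]
  field_simp

end SlowVariation

lemma exists_nonneg_eq_of_continuousOn {L : ℝ → ℝ} (hcont : ContinuousOn L (Ici 0))
    (htop : Tendsto L atTop atTop) {v : ℝ} (hv : L 0 ≤ v) : ∃ s, 0 ≤ s ∧ L s = v := by
  obtain ⟨b, hb, hb₀⟩ := ((htop.eventually_ge_atTop v).and (eventually_ge_atTop 0)).exists
  obtain ⟨s, hs, hsv⟩ := intermediate_value_Icc hb₀ (hcont.mono Icc_subset_Ici_self) ⟨hv, hb⟩
  exact ⟨s, hs.1, hsv⟩

lemma tendsto_atTop_of_monotoneOn_of_tendsto_comp {ι : Type*} {l : Filter ι} {L : ℝ → ℝ}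
    (hmono : MonotoneOn L (Ici 0)) {t : ι → ℝ} (ht : ∀ i, 0 ≤ t i)
    (h : Tendsto (fun i => L (t i)) l atTop) : Tendsto t l atTop := by
  refine tendsto_atTop.2 fun M => ?_
  filter_upwards [h.eventually_gt_atTop (L (max M 0))] with i hi
  by_contra! hlt
  exact hi.not_ge (hmono (ht i) (le_max_right M 0) (hlt.le.trans (le_max_left M 0)))

section IID

variable {Ω : Type*} [MeasurableSpace Ω] {P : Measure Ω} {ξ : ℕ → Ω → ℝ}

lemma tendsto_measureReal_le_pow [IsProbabilityMeasure P] {X : Ω → ℝ} (hX : Measurable X)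
    {y : ℕ → ℝ} {c : ℝ} (h : Tendsto (fun n : ℕ => (n : ℝ) * P.real {ω | y n < X ω}) atTop (𝓝 c)) :
    Tendsto (fun n => P.real {ω | X ω ≤ y n} ^ n) atTop (𝓝 (Real.exp (-c))) := by
  have hcompl : ∀ n, P.real {ω | X ω ≤ y n} = 1 + -P.real {ω | y n < X ω} := fun n => by
    have : {ω | X ω ≤ y n} = {ω | y n < X ω}ᶜ := by ext; simp
    rw [this, probReal_compl_eq_one_sub (s := {ω | y n < X ω}) (hX measurableSet_Ioi)]
    ring
  simp only [hcompl]
  exact Real.tendsto_one_add_pow_exp_of_tendsto (by simpa using h.neg)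

lemma measureReal_biInter_le_eq_pow (hindep : iIndepFun ξ P)
    (hid : ∀ n, IdentDistrib (ξ n) (ξ 0) P P) (n : ℕ) (y : ℝ) :
    P.real (⋂ i ∈ Finset.range n, {ω | ξ i ω ≤ y}) = P.real {ω | ξ 0 ω ≤ y} ^ n := by
  have hsame : ∀ i ∈ Finset.range n, P {ω | ξ i ω ≤ y} = P {ω | ξ 0 ω ≤ y} :=
    fun i _ => (hid i).measure_mem_eq measurableSet_Iic
  have hprod := hindep.meas_biInter (S := Finset.range n) (s := fun i => {ω | ξ i ω ≤ y})
    fun i _ => ⟨Iic y, measurableSet_Iic, rfl⟩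
  rw [measureReal_def, measureReal_def, ← ENNReal.toReal_pow, hprod, Finset.prod_congr rfl hsame,
    Finset.prod_const, Finset.card_range]

lemma measureReal_rwS_le_le_pow [IsFiniteMeasure P] (hindep : iIndepFun ξ P)
    (hid : ∀ n, IdentDistrib (ξ n) (ξ 0) P P) (hnonneg : ∀ n ω, 0 ≤ ξ n ω) (n : ℕ) (t : ℝ) :
    P.real {ω | rwS ξ n ω ≤ t} ≤ P.real {ω | ξ 0 ω ≤ t} ^ n := by
  rw [← measureReal_biInter_le_eq_pow hindep hid]
  exact measureReal_mono fun ω hω => mem_iInter₂.2 fun i hi =>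
    (Finset.single_le_sum (fun j _ => hnonneg j ω) hi).trans hω

lemma measureReal_le_sum_min_le [IsFiniteMeasure P] (hmeas : ∀ n, Measurable (ξ n))
    (hid : ∀ n, IdentDistrib (ξ n) (ξ 0) P P) (hnonneg : ∀ n ω, 0 ≤ ξ n ω) (n : ℕ) {t y : ℝ}
    (ht : 0 < t) (hy : 0 ≤ y) :
    P.real {ω | t ≤ ∑ i ∈ Finset.range n, min (ξ i ω) y} ≤ n * (∫ ω, min (ξ 0 ω) y ∂P) / t := by
  have hint : ∀ i ∈ Finset.range n, Integrable (fun ω => min (ξ i ω) y) P :=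
    fun i _ => integrable_min_const (hmeas i) (hnonneg i) hy
  have hsame : ∀ i ∈ Finset.range n, ∫ ω, min (ξ i ω) y ∂P = ∫ ω, min (ξ 0 ω) y ∂P :=
    fun i _ => ((hid i).comp (measurable_id.min measurable_const)).integral_eq
  have hmean : ∫ ω, ∑ i ∈ Finset.range n, min (ξ i ω) y ∂P = n * ∫ ω, min (ξ 0 ω) y ∂P := by
    rw [integral_finsetSum _ hint, Finset.sum_congr rfl hsame, Finset.sum_const,
      Finset.card_range, nsmul_eq_mul]
  rw [le_div_iff₀ ht, mul_comm, ← hmean]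
  exact mul_meas_ge_le_integral_of_nonneg
    (.of_forall fun ω => Finset.sum_nonneg fun i _ => le_min (hnonneg i ω) hy)
    (integrable_finsetSum _ hint) t

lemma measureReal_le_pow_le_measureReal_rwS_le_add [IsFiniteMeasure P]
    (hmeas : ∀ n, Measurable (ξ n)) (hindep : iIndepFun ξ P)
    (hid : ∀ n, IdentDistrib (ξ n) (ξ 0) P P) (hnonneg : ∀ n ω, 0 ≤ ξ n ω) (n : ℕ) {t y : ℝ}
    (ht : 0 < t) (hy : 0 ≤ y) :
    P.real {ω | ξ 0 ω ≤ y} ^ n ≤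
      P.real {ω | rwS ξ n ω ≤ t} + n * (∫ ω, min (ξ 0 ω) y ∂P) / t := by
  rw [← measureReal_biInter_le_eq_pow hindep hid]
  calc P.real (⋂ i ∈ Finset.range n, {ω | ξ i ω ≤ y})
      ≤ P.real ({ω | rwS ξ n ω ≤ t} ∪ {ω | t ≤ ∑ i ∈ Finset.range n, min (ξ i ω) y}) := by
        refine measureReal_mono fun ω hω => ?_
        rw [mem_iInter₂] at hω
        rcases le_total (rwS ξ n ω) t with h | h
        · exact Or.inl h
        · refine Or.inr (h.trans_eq ?_)
          exact (Finset.sum_congr rfl fun i hi => min_eq_left (hω i hi)).symm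
    _ ≤ _ := (measureReal_union_le _ _).trans
        (add_le_add le_rfl (measureReal_le_sum_min_le hmeas hid hnonneg n ht hy))

theorem tendsto_measureReal_rwS_le [IsProbabilityMeasure P] (hmeas : ∀ n, Measurable (ξ n))
    (hindep : iIndepFun ξ P) (hid : ∀ n, IdentDistrib (ξ n) (ξ 0) P P)
    (hnonneg : ∀ n ω, 0 ≤ ξ n ω) {L : ℝ → ℝ}
    (hL : SlowlyVarying L) (hmono : MonotoneOn L (Ici 0))
    (htail : Tendsto (fun y => P.real {ω | y < ξ 0 ω} * L y) atTop (𝓝 1)) {t : ℕ → ℝ}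
    (ht : Tendsto t atTop atTop) {x : ℝ} (hx : 0 < x) (htL : ∀ n, L (t n) = n * x) :
    Tendsto (fun n => P.real {ω | rwS ξ n ω ≤ t n}) atTop (𝓝 (Real.exp (-(1 / x)))) := by
  have hmax : ∀ c > 0, Tendsto (fun n => P.real {ω | ξ 0 ω ≤ c * t n} ^ n) atTop
      (𝓝 (Real.exp (-(1 / x)))) := fun c hc =>
    tendsto_measureReal_le_pow (hmeas 0) <| hL.tendsto_natCast_mul htail
      (eventually_pos_of_tendsto_mul (fun _ => measureReal_nonneg) htail) ht hx.ne' htL hc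
  obtain ⟨C, hC, hCmean⟩ := hL.exists_integral_min_le hmono (hmeas 0) (hnonneg 0) htail
  refine tendsto_order.2 ⟨fun l hl => ?_, fun u hu => ?_⟩
  · -- `δ` makes the Markov error `C * δ / x` half the gap `exp (-1 / x) - l`
    set δ := x * (Real.exp (-(1 / x)) - l) / (2 * C)
    have hδ : 0 < δ := div_pos (mul_pos hx (sub_pos.2 hl)) (by positivity)
    have hlim := (hmax δ hδ).sub ((hL.tendsto_natCast_div ht hx.ne' htL hδ).const_mul (C * δ))
    have hlt : l < Real.exp (-(1 / x)) - C * δ * (1 / x) := by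
      have : C * δ * (1 / x) = (Real.exp (-(1 / x)) - l) / 2 := by
        simp only [δ]; field_simp
      linarith
    filter_upwards [hlim.eventually_const_lt hlt, ht.eventually_gt_atTop 0,
      (ht.const_mul_atTop hδ).eventually hCmean] with n hn htn hCn
    refine hn.trans_le ?_
    have hsum := measureReal_le_pow_le_measureReal_rwS_le_add (P := P) hmeas hindep hid hnonneg n
      htn (mul_nonneg hδ.le htn.le)
    have htrunc : n * (∫ ω, min (ξ 0 ω) (δ * t n) ∂P) / t n ≤ C * δ * (n / L (δ * t n)) :=
      calc n * (∫ ω, min (ξ 0 ω) (δ * t n) ∂P) / t n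
          ≤ n * (C * (δ * t n / L (δ * t n))) / t n := by gcongr
        _ = C * δ * (n / L (δ * t n)) := by field_simp
    linarith
  · filter_upwards [(hmax 1 one_pos).eventually_lt_const hu] with n hn
    exact (measureReal_rwS_le_le_pow hindep hid hnonneg n (t n)).trans_lt (by simpa using hn)

end IID

/-- Darling's theorem: if `ξ, ξ₁, ξ₂, …` are i.i.d. positive random variables with
`P(ξ > x) ~ 1/L(x)` for a strictly increasing continuous slowly varying `L` with
`L 0 = 0` and `L(∞) = ∞`, then `L(S_n)/n` converges in distribution to a standard
Fréchet random variable: `P(L(S_n)/n ≤ x) → exp(-1/x)` for every `x > 0`. -/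
theorem stmt12 {Ω : Type*} [MeasurableSpace Ω] (P : Measure Ω) [IsProbabilityMeasure P]
    (ξ : ℕ → Ω → ℝ) (hmeas : ∀ n, Measurable (ξ n))
    (hindep : iIndepFun ξ P)
    (hid : ∀ n, IdentDistrib (ξ n) (ξ 0) P P)
    (hpos : ∀ n ω, 0 < ξ n ω)
    (L : ℝ → ℝ)
    (hmono : StrictMonoOn L (Ici 0)) (hcont : ContinuousOn L (Ici 0))
    (hL0 : L 0 = 0) (htop : Tendsto L atTop atTop)
    (hslow : ∀ c > (0:ℝ), Tendsto (fun x => L (c * x) / L x) atTop (𝓝 1))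
    (htail : Tendsto (fun x => (P {ω | x < ξ 0 ω}).toReal * L x) atTop (𝓝 1)) :
    ∀ x > (0:ℝ),
      Tendsto (fun n : ℕ => (P {ω | L (rwS ξ n ω) / n ≤ x}).toReal) atTop
        (𝓝 (Real.exp (-1 / x))) := by
  intro x hx
  choose t ht₀ htL using fun n : ℕ =>
    exists_nonneg_eq_of_continuousOn hcont htop (v := n * x) (by rw [hL0]; positivity)
  have httop : Tendsto t atTop atTop :=
    tendsto_atTop_of_monotoneOn_of_tendsto_comp hmono.monotoneOn ht₀
      (by simpa only [htL] using tendsto_natCast_atTop_atTop.atTop_mul_const hx)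
  have hevent : ∀ n ≥ 1, {ω | L (rwS ξ n ω) / n ≤ x} = {ω | rwS ξ n ω ≤ t n} := fun n hn => by
    ext ω
    have hS : 0 ≤ rwS ξ n ω := Finset.sum_nonneg fun i _ => (hpos i ω).le
    rw [mem_ofPred_eq, mem_ofPred_eq, div_le_iff₀ (by exact_mod_cast hn), mul_comm, ← htL]
    exact hmono.le_iff_le hS (ht₀ n)
  rw [neg_div]
  refine (tendsto_measureReal_rwS_le hmeas hindep hid (fun n ω => (hpos n ω).le) hslow
    hmono.monotoneOn htail httop hx htL).congr' ?_
  filter_upwards [eventually_ge_atTop 1] with n hn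
  rw [hevent n hn, measureReal_def]
end

section
/- Let ξ, ξ₁, ξ₂, … be i.i.d. positive random variables with P(ξ > x) ~ 1/L(x) as x → ∞ for a strictly increasing continuous slowly varying L with L(0)=0, L(∞)=∞. Let Sₙ = ξ₁+…+ξₙ, S₀ = 0, and ν(t) = inf{k ≥ 1 : S_k > t}. Then ν(t)/L(t) converges in distribution, as t → ∞, to a standard exponential random variable. -/
open MeasureTheory ProbabilityTheory Set Filter Topology

lemma single_le_rwS {Ω : Type*} (ξ : ℕ → Ω → ℝ) (hpos : ∀ n ω, 0 < ξ n ω)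
    {i n : ℕ} (h : i < n) (ω : Ω) : ξ i ω ≤ rwS ξ n ω := by
  apply Finset.single_le_sum (f := fun j => ξ j ω) (fun j _ => (hpos j ω).le)
  simpa using h

lemma rwS_mono {Ω : Type*} (ξ : ℕ → Ω → ℝ) (hpos : ∀ n ω, 0 < ξ n ω) (ω : Ω) :
    Monotone (fun n => rwS ξ n ω) := by
  apply monotone_nat_of_le_succ
  intro n
  simp only [rwS, Finset.sum_range_succ]
  nlinarith [hpos n ω]

lemma prod_tail {Ω : Type*} [MeasurableSpace Ω] (P : Measure Ω) [IsProbabilityMeasure P]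
    (ξ : ℕ → Ω → ℝ)
    (hindep : iIndepFun ξ P)
    (hid : ∀ n, IdentDistrib (ξ n) (ξ 0) P P)
    (c : ℝ) (n : ℕ) :
    P (⋂ i ∈ Finset.range n, {ω | ξ i ω ≤ c}) = (P {ω | ξ 0 ω ≤ c}) ^ n := by
  have h := hindep.meas_biInter (S := Finset.range n) (s := fun i => {ω | ξ i ω ≤ c})
    (fun i _ => ⟨Iic c, measurableSet_Iic, rfl⟩)
  rw [h]
  have : ∀ i, P {ω | ξ i ω ≤ c} = P {ω | ξ 0 ω ≤ c} := fun i =>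
    (hid i).measure_mem_eq measurableSet_Iic
  rw [Finset.prod_congr rfl (fun i _ => this i), Finset.prod_const, Finset.card_range]

lemma meas_union_tail {Ω : Type*} [MeasurableSpace Ω] (P : Measure Ω) [IsProbabilityMeasure P]
    (ξ : ℕ → Ω → ℝ) (hmeas : ∀ n, Measurable (ξ n))
    (hindep : iIndepFun ξ P)
    (hid : ∀ n, IdentDistrib (ξ n) (ξ 0) P P)
    (c : ℝ) (n : ℕ) :
    (P (⋃ i ∈ Finset.range n, {ω | c < ξ i ω})).toReal
      = 1 - (1 - (P {ω | c < ξ 0 ω}).toReal) ^ n := by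
  have hcompl : (⋃ i ∈ Finset.range n, {ω | c < ξ i ω})
      = (⋂ i ∈ Finset.range n, {ω | ξ i ω ≤ c})ᶜ := by
    simp [compl_iInter, compl_setOf, not_le]
  have hmeasset : MeasurableSet (⋂ i ∈ Finset.range n, {ω | ξ i ω ≤ c}) :=
    MeasurableSet.biInter (Finset.range n).countable_toSet
      (fun i _ => measurableSet_le (hmeas i) measurable_const)
  rw [hcompl, prob_compl_eq_one_sub hmeasset, prod_tail P ξ hindep hid]
  have h1 : P {ω | ξ 0 ω ≤ c} = 1 - P {ω | c < ξ 0 ω} := by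
    have : {ω | ξ 0 ω ≤ c} = {ω | c < ξ 0 ω}ᶜ := by ext ω; simp
    rw [this, prob_compl_eq_one_sub (measurableSet_lt measurable_const (hmeas 0))]
  have hle : P {ω | c < ξ 0 ω} ≤ 1 := prob_le_one
  rw [ENNReal.toReal_sub_of_le (by simpa using pow_le_one' prob_le_one n) (by simp)]
  rw [ENNReal.toReal_pow, h1, ENNReal.toReal_sub_of_le hle (by simp)]
  simp

lemma meas_nu {Ω : Type*} [MeasurableSpace Ω] (P : Measure Ω) [IsProbabilityMeasure P]
    (ξ : ℕ → Ω → ℝ) (hmeas : ∀ n, Measurable (ξ n))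
    (hindep : iIndepFun ξ P)
    (hid : ∀ n, IdentDistrib (ξ n) (ξ 0) P P)
    (hpos : ∀ n ω, 0 < ξ n ω)
    (t : ℝ) (n : ℕ) (hq : P {ω | t < ξ 0 ω} ≠ 0) :
    P {ω | rwNu ξ t ω ≤ n} = P {ω | t < rwS ξ n ω} := by
  set N : Set Ω := {ω | ∀ k, rwS ξ k ω ≤ t} with hN
  have hsub : {ω | rwNu ξ t ω ≤ n} ⊆ {ω | t < rwS ξ n ω} ∪ N := by
    intro ω hω
    by_cases hA : ∃ k, t < rwS ξ k ω
    · left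
      have hne : {k : ℕ | t < rwS ξ k ω}.Nonempty := hA
      have hmem := Nat.sInf_mem hne
      have : t < rwS ξ (rwNu ξ t ω) ω := hmem
      exact lt_of_lt_of_le this (rwS_mono ξ hpos ω hω)
    · right
      intro k
      exact le_of_not_gt (fun h => hA ⟨k, h⟩)
  have hsup : {ω | t < rwS ξ n ω} ⊆ {ω | rwNu ξ t ω ≤ n} := fun ω hω => Nat.sInf_le hω
  have hNzero : P N = 0 := by
    have hq1 : P {ω | ξ 0 ω ≤ t} < 1 := by
      have : {ω | ξ 0 ω ≤ t} = {ω | t < ξ 0 ω}ᶜ := by ext ω; simp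
      rw [this, prob_compl_eq_one_sub (measurableSet_lt measurable_const (hmeas 0))]
      exact ENNReal.sub_lt_self ENNReal.one_ne_top one_ne_zero hq
    have hbound : ∀ m, P N ≤ (P {ω | ξ 0 ω ≤ t}) ^ m := by
      intro m
      calc P N ≤ P (⋂ i ∈ Finset.range m, {ω | ξ i ω ≤ t}) := by
            apply measure_mono
            intro ω hω
            simp only [mem_iInter]
            intro i hi
            simp only [Finset.mem_range] at hi
            exact le_trans (single_le_rwS ξ hpos (Nat.lt_succ_self i) ω) (hω (i+1))
        _ = (P {ω | ξ 0 ω ≤ t}) ^ m := prod_tail P ξ hindep hid t m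
    have htends : Tendsto (fun m => (P {ω | ξ 0 ω ≤ t}) ^ m) atTop (𝓝 0) :=
      ENNReal.tendsto_pow_atTop_nhds_zero_of_lt_one hq1
    have : P N ≤ 0 := ge_of_tendsto' htends hbound
    exact le_antisymm this zero_le
  refine le_antisymm ?_ (measure_mono hsup)
  calc P {ω | rwNu ξ t ω ≤ n} ≤ P ({ω | t < rwS ξ n ω} ∪ N) := measure_mono hsub
    _ ≤ P {ω | t < rwS ξ n ω} + P N := measure_union_le _ _
    _ = P {ω | t < rwS ξ n ω} := by rw [hNzero, add_zero]

lemma integral_min_le {Ω : Type*} [MeasurableSpace Ω] (P : Measure Ω) [IsProbabilityMeasure P]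
    (ξ : ℕ → Ω → ℝ) (hmeas : ∀ n, Measurable (ξ n))
    (hpos : ∀ n ω, 0 < ξ n ω) {a : ℝ} (ha : 0 < a) :
    ∫ ω, min (ξ 0 ω) a ∂P ≤ ∫ u in (0:ℝ)..a, (P {ω | u < ξ 0 ω}).toReal := by
  set g : ℝ → ℝ := fun u => (P {ω | u < ξ 0 ω}).toReal with hg
  have hmin_meas : Measurable (fun ω => min (ξ 0 ω) a) := (hmeas 0).min measurable_const
  have hmin_nn : 0 ≤ᵐ[P] (fun ω => min (ξ 0 ω) a) :=
    Filter.Eventually.of_forall (fun ω => le_min (hpos 0 ω).le ha.le)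
  have hint : Integrable (fun ω => min (ξ 0 ω) a) P := by
    refine Integrable.mono' (integrable_const a) hmin_meas.aestronglyMeasurable ?_
    filter_upwards with ω
    rw [Real.norm_eq_abs, abs_of_nonneg (le_min (hpos 0 ω).le ha.le)]
    exact min_le_right _ _
  rw [hint.integral_eq_integral_meas_lt hmin_nn]
  simp only [measureReal_def]
  have hcongr : ∀ u ∈ Ioi (0:ℝ),
      (P {ω | u < min (ξ 0 ω) a}).toReal = (Ioo (0:ℝ) a).indicator g u := by
    intro u hu
    by_cases hua : u < a
    · have : {ω | u < min (ξ 0 ω) a} = {ω | u < ξ 0 ω} := by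
        ext ω; simp [lt_min_iff, hua]
      rw [this, indicator_of_mem (by exact ⟨hu, hua⟩)]
    · have : {ω | u < min (ξ 0 ω) a} = ∅ := by
        ext ω
        simp only [mem_setOf_eq, mem_empty_iff_false, iff_false, not_lt]
        exact le_trans (min_le_right _ _) (not_lt.mp hua)
      rw [this, indicator_of_notMem (by simp [not_lt.mp hua])]
      simp
  rw [setIntegral_congr_fun measurableSet_Ioi hcongr, setIntegral_indicator measurableSet_Ioo]
  have : Ioi (0:ℝ) ∩ Ioo 0 a = Ioo 0 a := by
    rw [inter_eq_right]; exact Ioo_subset_Ioi_self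
  rw [this, intervalIntegral.integral_of_le ha.le, ← integral_Ioc_eq_integral_Ioo]

lemma karamata_bound (p L : ℝ → ℝ) (hp_anti : Antitone p)
    (hp0 : ∀ u, 0 ≤ p u) (hp1 : ∀ u, p u ≤ 1)
    (hLpos : ∀ᶠ s in atTop, 0 < L s)
    (hL2 : ∀ᶠ s in atTop, L (2*s) ≤ (5/4) * L s)
    (hpL : ∀ᶠ s in atTop, p s * L s ≤ 2)
    (hLmono : MonotoneOn L (Ici 0)) :
    ∃ B s₁, 0 ≤ B ∧ 0 < s₁ ∧ ∀ s ≥ s₁, L s * (∫ u in (0:ℝ)..s, p u) ≤ B * s := by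
  obtain ⟨s₀', hs₀'⟩ := eventually_atTop.mp ((hLpos.and hL2).and hpL)
  set s₀ := max s₀' 1 with hs₀def
  have hs₀pos : 0 < s₀ := lt_of_lt_of_le one_pos (le_max_right _ _)
  have hProp : ∀ s ≥ s₀, 0 < L s ∧ L (2*s) ≤ (5/4) * L s ∧ p s * L s ≤ 2 := by
    intro s hs
    have := hs₀' s (le_trans (le_max_left _ _) hs)
    exact ⟨this.1.1, this.1.2, this.2⟩
  set I : ℝ → ℝ := fun s => ∫ u in (0:ℝ)..s, p u with hI
  have hInt : ∀ b c : ℝ, IntervalIntegrable p volume b c := fun b c =>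
    hp_anti.intervalIntegrable
  have hInonneg : ∀ s, 0 ≤ s → 0 ≤ I s := by
    intro s hs
    apply intervalIntegral.integral_nonneg hs (fun u _ => hp0 u)
  have hIle : ∀ s, 0 ≤ s → I s ≤ s := by
    intro s hs
    calc I s ≤ ∫ u in (0:ℝ)..s, (1:ℝ) :=
          intervalIntegral.integral_mono_on hs (hInt 0 s) intervalIntegrable_const
            (fun u _ => hp1 u)
      _ = s := by simp
  have hIrec : ∀ s, 0 < s → I (2*s) ≤ I s + s * p s := by
    intro s hs
    have hadd : I s + (∫ u in s..(2*s), p u) = I (2*s) :=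
      intervalIntegral.integral_add_adjacent_intervals (hInt 0 s) (hInt s (2*s))
    have hle : (∫ u in s..(2*s), p u) ≤ ∫ u in s..(2*s), p s :=
      intervalIntegral.integral_mono_on (by linarith) (hInt s (2*s))
        intervalIntegrable_const (fun u hu => hp_anti hu.1)
    have : (∫ u in s..(2*s), (p s : ℝ)) = s * p s := by
      rw [intervalIntegral.integral_const, smul_eq_mul]; ring
    linarith [hadd, hle, this ▸ hle]
  have hL2s₀pos : 0 < L (2*s₀) :=
    lt_of_lt_of_le (hProp s₀ le_rfl).1
      (hLmono (mem_Ici.mpr (le_of_lt hs₀pos)) (mem_Ici.mpr (by linarith)) (by linarith))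
  set B : ℝ := max (L (2*s₀)) (10/3) with hB
  have hBnn : (0:ℝ) ≤ B := le_trans (by norm_num) (le_max_right _ _)
  have hB103 : (10/3 : ℝ) ≤ B := le_max_right _ _
  have key : ∀ k : ℕ, ∀ s, s₀ ≤ s → s ≤ 2^(k+1) * s₀ → L s * I s ≤ B * s := by
    intro k
    induction k with
    | zero =>
      intro s hs hs2
      have h0s : (0:ℝ) ≤ s := le_trans hs₀pos.le hs
      have hLs : L s ≤ L (2*s₀) := hLmono (mem_Ici.mpr h0s) (mem_Ici.mpr (by linarith))
        (by norm_num at hs2 ⊢; linarith)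
      calc L s * I s ≤ L (2*s₀) * I s :=
            mul_le_mul_of_nonneg_right hLs (hInonneg s h0s)
        _ ≤ L (2*s₀) * s := mul_le_mul_of_nonneg_left (hIle s h0s) hL2s₀pos.le
        _ ≤ B * s := mul_le_mul_of_nonneg_right (le_max_left _ _) h0s
    | succ k ih =>
      intro s hs hs2
      have h0s : (0:ℝ) ≤ s := le_trans hs₀pos.le hs
      by_cases hcase : s ≤ 2 * s₀
      · have hLs : L s ≤ L (2*s₀) := hLmono (mem_Ici.mpr h0s) (mem_Ici.mpr (by linarith)) hcase
        calc L s * I s ≤ L (2*s₀) * I s :=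
              mul_le_mul_of_nonneg_right hLs (hInonneg s h0s)
          _ ≤ L (2*s₀) * s := mul_le_mul_of_nonneg_left (hIle s h0s) hL2s₀pos.le
          _ ≤ B * s := mul_le_mul_of_nonneg_right (le_max_left _ _) h0s
      · push_neg at hcase
        set u := s / 2 with hu
        have hus : s = 2 * u := by rw [hu]; ring
        have hu0 : s₀ ≤ u := by rw [hu]; linarith
        have huhi : u ≤ 2^(k+1) * s₀ := by
          rw [hu]
          rw [pow_succ] at hs2
          linarith
        have ihu := ih u hu0 huhi
        obtain ⟨hLu, hL2u, hpLu⟩ := hProp u hu0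
        have hupos : 0 < u := lt_of_lt_of_le hs₀pos hu0
        have hIu : 0 ≤ I u := hInonneg u hupos.le
        have hrec := hIrec u hupos
        have hL2upos : 0 ≤ L (2*u) := (lt_of_lt_of_le hLu
          (hLmono (mem_Ici.mpr hupos.le) (mem_Ici.mpr (by linarith)) (by linarith))).le
        calc L s * I s = L (2*u) * I (2*u) := by rw [hus]
          _ ≤ L (2*u) * (I u + u * p u) := mul_le_mul_of_nonneg_left hrec hL2upos
          _ ≤ ((5/4) * L u) * (I u + u * p u) := by
              apply mul_le_mul_of_nonneg_right hL2u
              have := hp0 u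
              nlinarith
          _ = (5/4) * (L u * I u) + (5/4) * u * (p u * L u) := by ring
          _ ≤ (5/4) * (B * u) + (5/4) * u * 2 := by
              have h1 : (5/4 : ℝ) * (L u * I u) ≤ (5/4) * (B * u) := by linarith
              have h2 : (5/4 : ℝ) * u * (p u * L u) ≤ (5/4) * u * 2 := by nlinarith
              linarith
          _ ≤ B * s := by rw [hus]; nlinarith
  refine ⟨B, s₀, hBnn, hs₀pos, fun s hs => ?_⟩
  obtain ⟨k, hk⟩ := pow_unbounded_of_one_lt (s / s₀) (by norm_num : (1:ℝ) < 2)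
  apply key k s hs
  have : s / s₀ < 2 ^ k := hk
  have h1 : s < 2 ^ k * s₀ := by
    rw [div_lt_iff₀ hs₀pos] at this
    linarith
  have h2 : (2:ℝ)^k ≤ 2^(k+1) := by
    apply pow_le_pow_right₀ (by norm_num)
    omega
  nlinarith [pow_pos (by norm_num : (0:ℝ) < 2) k, hs₀pos]

lemma pow_tendsto_exp {a : ℝ → ℝ} {m : ℝ → ℕ} {x : ℝ} (hx : 0 < x)
    (ha0 : ∀ᶠ t in atTop, 0 ≤ a t)
    (hma : Tendsto (fun t => (m t : ℝ) * a t) atTop (𝓝 x))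
    (ha : Tendsto a atTop (𝓝 0)) :
    Tendsto (fun t => (1 - a t) ^ (m t)) atTop (𝓝 (Real.exp (-x))) := by
  have hapos : ∀ᶠ t in atTop, 0 < a t := by
    filter_upwards [hma.eventually (eventually_gt_nhds (show 0 < x from hx)), ha0] with t h1 h2
    rcases lt_or_eq_of_le h2 with h | h
    · exact h
    · exfalso; rw [← h] at h1; simp at h1
  have hasmall : ∀ᶠ t in atTop, a t < 1/2 := ha.eventually (eventually_lt_nhds (by norm_num))
  have hderiv : HasDerivAt (fun y : ℝ => Real.log (1 - y)) (-1) 0 := by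
    have h1 : HasDerivAt (fun y : ℝ => 1 - y) (-1) 0 := by
      simpa using (hasDerivAt_id (0:ℝ)).const_sub (1:ℝ)
    have := h1.log (by norm_num)
    simpa using this
  have hslope : Tendsto (fun y => Real.log (1 - y) / y) (𝓝[≠] 0) (𝓝 (-1)) := by
    have := hasDerivAt_iff_tendsto_slope.mp hderiv
    apply this.congr'
    filter_upwards [self_mem_nhdsWithin] with y hy
    simp [slope_def_field, div_eq_iff]
  have hane : Tendsto a atTop (𝓝[≠] 0) := by
    apply tendsto_nhdsWithin_of_tendsto_nhds_of_eventually_within _ ha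
    filter_upwards [hapos] with t ht
    exact ne_of_gt ht
  have hcomp : Tendsto (fun t => Real.log (1 - a t) / a t) atTop (𝓝 (-1)) :=
    hslope.comp hane
  have hmul : Tendsto (fun t => (m t : ℝ) * Real.log (1 - a t)) atTop (𝓝 (-x)) := by
    have := hma.mul hcomp
    rw [show x * (-1) = -x by ring] at this
    apply this.congr'
    filter_upwards [hapos] with t ht
    field_simp
  have hexp : Tendsto (fun t => Real.exp ((m t : ℝ) * Real.log (1 - a t))) atTop
      (𝓝 (Real.exp (-x))) := (Real.continuous_exp.tendsto _).comp hmul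
  apply hexp.congr'
  filter_upwards [hapos, hasmall] with t h1 h2
  have hpos1 : 0 < 1 - a t := by linarith
  rw [← Real.log_pow, Real.exp_log (by positivity)]

lemma upper_bound {Ω : Type*} [MeasurableSpace Ω] (P : Measure Ω) [IsProbabilityMeasure P]
    (ξ : ℕ → Ω → ℝ) (hmeas : ∀ n, Measurable (ξ n))
    (hindep : iIndepFun ξ P)
    (hid : ∀ n, IdentDistrib (ξ n) (ξ 0) P P)
    (hpos : ∀ n ω, 0 < ξ n ω)
    (t a : ℝ) (ht : 0 < t) (ha : 0 < a) (hab : a ≤ (1/2)*t) (n : ℕ) :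
    (P {ω | t < rwS ξ n ω}).toReal ≤
      (1 - (1 - (P {ω | (1/2)*t < ξ 0 ω}).toReal)^n)
      + n * ((P {ω | a < ξ 0 ω}).toReal - (P {ω | (1/2)*t < ξ 0 ω}).toReal)
      + n * (∫ u in (0:ℝ)..a, (P {ω | u < ξ 0 ω}).toReal) / t := by
  set b : ℝ := (1/2)*t with hb
  set E₁ : Set Ω := ⋃ i ∈ Finset.range n, {ω | b < ξ i ω} with hE₁
  set E₂ : Set Ω := ⋃ i ∈ Finset.range n, {ω | a < ξ i ω ∧ ξ i ω ≤ b} with hE₂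
  set E₃ : Set Ω := {ω | t < ∑ i ∈ Finset.range n, min (ξ i ω) a} with hE₃
  have hincl : {ω | t < rwS ξ n ω} ⊆ E₁ ∪ E₂ ∪ E₃ := by
    intro ω hω
    by_contra hcon
    simp only [mem_union, not_or, hE₁, hE₂, hE₃, mem_iUnion, mem_setOf_eq, not_exists,
      not_and, not_lt] at hcon
    obtain ⟨⟨h1, h2⟩, h3⟩ := hcon
    have hall : ∀ i ∈ Finset.range n, ξ i ω ≤ a := by
      intro i hi
      by_contra hia
      push_neg at hia
      exact (h2 i hi hia) (h1 i hi)
    have : ∑ i ∈ Finset.range n, min (ξ i ω) a = rwS ξ n ω := by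
      apply Finset.sum_congr rfl
      intro i hi
      exact min_eq_left (hall i hi)
    exact absurd (this ▸ hω) (not_lt.mpr h3)
  have hmeasbound : P {ω | t < rwS ξ n ω} ≤ P E₁ + P E₂ + P E₃ :=
    le_trans (measure_mono hincl)
      (le_trans (measure_union_le _ _) (add_le_add (measure_union_le _ _) le_rfl))
  have htoReal : (P {ω | t < rwS ξ n ω}).toReal ≤ (P E₁).toReal + (P E₂).toReal + (P E₃).toReal := by
    have h := ENNReal.toReal_mono (by simp) hmeasbound
    rwa [ENNReal.toReal_add (by simp) (by simp),
      ENNReal.toReal_add (by simp) (by simp)] at h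
  have hE₁eq : (P E₁).toReal = 1 - (1 - (P {ω | b < ξ 0 ω}).toReal)^n :=
    meas_union_tail P ξ hmeas hindep hid b n
  have hE₂le : (P E₂).toReal ≤ n * ((P {ω | a < ξ 0 ω}).toReal - (P {ω | b < ξ 0 ω}).toReal) := by
    have hsub : {ω | b < ξ 0 ω} ⊆ {ω | a < ξ 0 ω} :=
      fun ω hω => lt_of_le_of_lt hab hω
    have hsingle : ∀ i, P {ω | a < ξ i ω ∧ ξ i ω ≤ b}
        = P {ω | a < ξ 0 ω} - P {ω | b < ξ 0 ω} := by
      intro i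
      have hpre : {ω | a < ξ i ω ∧ ξ i ω ≤ b} = ξ i ⁻¹' (Ioc a b) := by
        ext ω; simp [Ioc]
      have hpre0 : {ω | a < ξ 0 ω ∧ ξ 0 ω ≤ b} = ξ 0 ⁻¹' (Ioc a b) := by
        ext ω; simp [Ioc]
      have hone : P {ω | a < ξ i ω ∧ ξ i ω ≤ b} = P {ω | a < ξ 0 ω ∧ ξ 0 ω ≤ b} := by
        rw [hpre, hpre0]
        exact (hid i).measure_mem_eq measurableSet_Ioc
      rw [hone]
      have hdiff : {ω | a < ξ 0 ω ∧ ξ 0 ω ≤ b} = {ω | a < ξ 0 ω} \ {ω | b < ξ 0 ω} := by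
        ext ω; simp only [mem_setOf_eq, mem_diff, not_lt]
      rw [hdiff, measure_diff hsub
        (measurableSet_lt measurable_const (hmeas 0)).nullMeasurableSet (by finiteness)]
    have hEle : P E₂ ≤ (n : ENNReal) * (P {ω | a < ξ 0 ω} - P {ω | b < ξ 0 ω}) := by
      calc P E₂ ≤ ∑ i ∈ Finset.range n, P {ω | a < ξ i ω ∧ ξ i ω ≤ b} :=
            measure_biUnion_finset_le _ _
        _ = ∑ i ∈ Finset.range n, (P {ω | a < ξ 0 ω} - P {ω | b < ξ 0 ω}) :=
            Finset.sum_congr rfl (fun i _ => hsingle i)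
        _ = (n : ENNReal) * (P {ω | a < ξ 0 ω} - P {ω | b < ξ 0 ω}) := by
            rw [Finset.sum_const, Finset.card_range, nsmul_eq_mul]
    have hsubne : P {ω | a < ξ 0 ω} - P {ω | b < ξ 0 ω} ≠ ⊤ :=
      ((tsub_le_self).trans_lt (measure_lt_top _ _)).ne
    calc (P E₂).toReal ≤ ((n : ENNReal) * (P {ω | a < ξ 0 ω} - P {ω | b < ξ 0 ω})).toReal :=
          ENNReal.toReal_mono (ENNReal.mul_ne_top (ENNReal.natCast_ne_top n) hsubne) hEle
      _ = n * ((P {ω | a < ξ 0 ω}).toReal - (P {ω | b < ξ 0 ω}).toReal) := by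
          rw [ENNReal.toReal_mul, ENNReal.toReal_sub_of_le (measure_mono hsub) (by finiteness)]
          simp
  have hE₃le : (P E₃).toReal ≤ n * (∫ u in (0:ℝ)..a, (P {ω | u < ξ 0 ω}).toReal) / t := by
    set T : Ω → ℝ := fun ω => ∑ i ∈ Finset.range n, min (ξ i ω) a with hT
    have hTnn : 0 ≤ᵐ[P] T := Filter.Eventually.of_forall (fun ω =>
      Finset.sum_nonneg (fun i _ => le_min (hpos i ω).le ha.le))
    have hTint : Integrable T P := by
      apply integrable_finset_sum
      intro i _
      refine Integrable.mono' (integrable_const a)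
        ((hmeas i).min measurable_const).aestronglyMeasurable ?_
      filter_upwards with ω
      rw [Real.norm_eq_abs, abs_of_nonneg (le_min (hpos i ω).le ha.le)]
      exact min_le_right _ _
    have hmarkov := mul_meas_ge_le_integral_of_nonneg hTnn hTint t
    have hintT : ∫ ω, T ω ∂P ≤ n * (∫ u in (0:ℝ)..a, (P {ω | u < ξ 0 ω}).toReal) := by
      have hsum : ∫ ω, T ω ∂P = ∑ i ∈ Finset.range n, ∫ ω, min (ξ i ω) a ∂P := by
        apply integral_finset_sum
        intro i _
        refine Integrable.mono' (integrable_const a)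
          ((hmeas i).min measurable_const).aestronglyMeasurable ?_
        filter_upwards with ω
        rw [Real.norm_eq_abs, abs_of_nonneg (le_min (hpos i ω).le ha.le)]
        exact min_le_right _ _
      rw [hsum]
      have hident : ∀ i, ∫ ω, min (ξ i ω) a ∂P = ∫ ω, min (ξ 0 ω) a ∂P := fun i =>
        ((hid i).comp (measurable_id.min measurable_const)).integral_eq
      calc ∑ i ∈ Finset.range n, ∫ ω, min (ξ i ω) a ∂P
          = n * ∫ ω, min (ξ 0 ω) a ∂P := by
            rw [Finset.sum_congr rfl (fun i _ => hident i), Finset.sum_const,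
              Finset.card_range, nsmul_eq_mul]
        _ ≤ n * (∫ u in (0:ℝ)..a, (P {ω | u < ξ 0 ω}).toReal) :=
            mul_le_mul_of_nonneg_left (integral_min_le P ξ hmeas hpos ha) (Nat.cast_nonneg n)
    have hE₃sub : (P E₃).toReal ≤ (P {ω | t ≤ T ω}).toReal := by
      apply ENNReal.toReal_mono (by finiteness)
      apply measure_mono
      intro ω hω
      simp only [hE₃, mem_setOf_eq] at hω ⊢
      exact hω.le
    calc (P E₃).toReal ≤ (P {ω | t ≤ T ω}).toReal := hE₃sub
      _ ≤ (∫ ω, T ω ∂P) / t := by rw [le_div_iff₀ ht]; rw [measureReal_def] at hmarkov; linarith [hmarkov]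
      _ ≤ (n * ∫ u in (0:ℝ)..a, (P {ω | u < ξ 0 ω}).toReal) / t := by gcongr
  linarith [htoReal, hE₁eq.le, hE₁eq.ge, hE₂le, hE₃le]

/-- Teicher's theorem: under the slowly varying tail assumption `P(ξ > x) ~ 1/L(x)`,
the first-passage time `ν(t)` satisfies `ν(t)/L(t) →ᵈ Exp(1)`:
`P(ν(t)/L(t) ≤ x) → 1 - exp(-x)` for every `x > 0`. -/
theorem stmt13 {Ω : Type*} [MeasurableSpace Ω] (P : Measure Ω) [IsProbabilityMeasure P]
    (ξ : ℕ → Ω → ℝ) (hmeas : ∀ n, Measurable (ξ n))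
    (hindep : iIndepFun ξ P)
    (hid : ∀ n, IdentDistrib (ξ n) (ξ 0) P P)
    (hpos : ∀ n ω, 0 < ξ n ω)
    (L : ℝ → ℝ)
    (hmono : StrictMonoOn L (Ici 0)) (hcont : ContinuousOn L (Ici 0))
    (hL0 : L 0 = 0) (htop : Tendsto L atTop atTop)
    (hslow : ∀ c > (0:ℝ), Tendsto (fun x => L (c * x) / L x) atTop (𝓝 1))
    (htail : Tendsto (fun x => (P {ω | x < ξ 0 ω}).toReal * L x) atTop (𝓝 1)) :
    ∀ x > (0:ℝ),
      Tendsto (fun t : ℝ => (P {ω | (rwNu ξ t ω : ℝ) / L t ≤ x}).toReal) atTop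
        (𝓝 (1 - Real.exp (-x))) := by
  intro x hx
  set p : ℝ → ℝ := fun u => (P {ω | u < ξ 0 ω}).toReal with hpdef
  set nt : ℝ → ℕ := fun t => ⌊x * L t⌋₊ with hntdef
  have hp0 : ∀ u, 0 ≤ p u := fun u => ENNReal.toReal_nonneg
  have hp1 : ∀ u, p u ≤ 1 := by
    intro u
    have h : P {ω | u < ξ 0 ω} ≤ 1 := prob_le_one
    calc p u ≤ (1 : ENNReal).toReal := ENNReal.toReal_mono ENNReal.one_ne_top h
      _ = 1 := by simp
  have hp_anti : Antitone p := by
    intro u v huv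
    exact ENNReal.toReal_mono (measure_ne_top _ _)
      (measure_mono (fun ω hω => lt_of_le_of_lt huv hω))
  have hLt : ∀ᶠ t in atTop, 0 < L t := htop.eventually (eventually_gt_atTop 0)
  have hp_tendsto0 : Tendsto p atTop (𝓝 0) := by
    have h1 : Tendsto (fun t => (L t)⁻¹) atTop (𝓝 0) := htop.inv_tendsto_atTop
    have h2 := htail.mul h1
    rw [show (1:ℝ) * 0 = 0 by ring] at h2
    apply h2.congr'
    filter_upwards [hLt] with t ht
    rw [mul_assoc, mul_inv_cancel₀ ht.ne', mul_one]
  have hqne : ∀ t : ℝ, P {ω | t < ξ 0 ω} ≠ 0 := by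
    intro t
    obtain ⟨s, h1, h2⟩ := ((htail.eventually (eventually_gt_nhds (by norm_num : (0:ℝ) < 1))).and
      (eventually_ge_atTop t)).exists
    have hps : P {ω | s < ξ 0 ω} ≠ 0 := by
      intro h0
      rw [h0] at h1
      simp at h1
    intro h0
    apply hps
    refine le_antisymm ?_ zero_le
    rw [← h0]
    exact measure_mono (fun ω hω => lt_of_le_of_lt h2 hω)
  -- the key ratio limit `⌊x L t⌋ * p(ct) → x`
  have hr : ∀ c : ℝ, 0 < c → Tendsto (fun t => ((nt t : ℕ) : ℝ) * p (c * t)) atTop (𝓝 x) := by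
    intro c hc
    have hct : Tendsto (fun t : ℝ => c * t) atTop atTop :=
      Tendsto.const_mul_atTop hc tendsto_id
    have h2 : Tendsto (fun t => p (c*t) * L (c*t)) atTop (𝓝 1) := htail.comp hct
    have hLct : ∀ᶠ t in atTop, 0 < L (c*t) :=
      (htop.comp hct).eventually (eventually_gt_atTop 0)
    have h1 : Tendsto (fun t => ((nt t : ℕ) : ℝ) / L t) atTop (𝓝 x) := by
      have hlow : Tendsto (fun t => x - 1 / L t) atTop (𝓝 x) := by
        have : Tendsto (fun t => 1 / L t) atTop (𝓝 0) := by
          exact htop.inv_tendsto_atTop.congr (fun t => by simp [one_div])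
        simpa using (tendsto_const_nhds (x := x)).sub this
      apply tendsto_of_tendsto_of_tendsto_of_le_of_le' hlow tendsto_const_nhds
      · filter_upwards [hLt] with t ht
        have hfl : x * L t - 1 < ((nt t : ℕ) : ℝ) := Nat.sub_one_lt_floor _
        rw [le_div_iff₀ ht]
        have h9 : (1 / L t) * L t = 1 := by field_simp
        nlinarith
      · filter_upwards [hLt] with t ht
        have hfl : ((nt t : ℕ) : ℝ) ≤ x * L t := Nat.floor_le (by positivity)
        rw [div_le_iff₀ ht]
        linarith
    have h3 : Tendsto (fun t => L t / L (c*t)) atTop (𝓝 1) := by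
      have := (hslow c hc).inv₀ one_ne_zero
      rw [inv_one] at this
      apply this.congr'
      filter_upwards [hLt, hLct] with t h4 h5
      rw [← one_div, one_div_div]
    have := (h1.mul h2).mul h3
    rw [show x * 1 * 1 = x by ring] at this
    apply this.congr'
    filter_upwards [hLt, hLct] with t h4 h5
    field_simp
  have hpow : ∀ c : ℝ, 0 < c →
      Tendsto (fun t => (1 - p (c*t))^(nt t)) atTop (𝓝 (Real.exp (-x))) := by
    intro c hc
    exact pow_tendsto_exp hx (Eventually.of_forall (fun t => hp0 _)) (hr c hc)
      (hp_tendsto0.comp (Tendsto.const_mul_atTop hc tendsto_id))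
  -- Karamata-type bound
  have hL2ev : ∀ᶠ s in atTop, L (2*s) ≤ (5/4) * L s := by
    filter_upwards [(hslow 2 (by norm_num)).eventually
      (eventually_le_nhds (by norm_num : (1:ℝ) < 5/4)), hLt] with s h1 h2
    rwa [div_le_iff₀ h2] at h1
  have hpLev : ∀ᶠ s in atTop, p s * L s ≤ 2 :=
    htail.eventually (eventually_le_nhds (by norm_num : (1:ℝ) < 2))
  obtain ⟨B, s₁, hBnn, hs₁pos, hKar⟩ :=
    karamata_bound p L hp_anti hp0 hp1 hLt hL2ev hpLev hmono.monotoneOn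
  -- duality
  have hdual : ∀ᶠ t in atTop, (P {ω | (rwNu ξ t ω : ℝ) / L t ≤ x}).toReal
      = (P {ω | t < rwS ξ (nt t) ω}).toReal := by
    filter_upwards [hLt] with t ht
    have hset : {ω | (rwNu ξ t ω : ℝ) / L t ≤ x} = {ω | rwNu ξ t ω ≤ nt t} := by
      ext ω
      rw [mem_setOf_eq, mem_setOf_eq, div_le_iff₀ ht]
      exact (Nat.le_floor_iff (by positivity)).symm
    rw [hset, meas_nu P ξ hmeas hindep hid hpos t (nt t) (hqne t)]
  -- lower bound
  have hlow : ∀ t : ℝ, 1 - (1 - p t)^(nt t) ≤ (P {ω | t < rwS ξ (nt t) ω}).toReal := by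
    intro t
    rw [← meas_union_tail P ξ hmeas hindep hid t (nt t)]
    apply ENNReal.toReal_mono (measure_ne_top _ _)
    apply measure_mono
    intro ω hω
    simp only [mem_iUnion, mem_setOf_eq, Finset.mem_range] at hω
    obtain ⟨i, hi, h⟩ := hω
    exact lt_of_lt_of_le h (single_le_rwS ξ hpos hi ω)
  -- final assembly
  set c₀ : ℝ := 1 - Real.exp (-x) with hc₀
  rw [Metric.tendsto_nhds]
  intro δ hδ
  set ε : ℝ := min (1/2) (δ / (6 * (2*x*(B+1) + 1))) with hεdef
  have hεpos : 0 < ε := lt_min (by norm_num) (by positivity)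
  have hεhalf : ε ≤ 1/2 := min_le_left _ _
  have hεsmall : 2*x*B*ε < δ/6 := by
    have h1 : ε ≤ δ / (6 * (2*x*(B+1) + 1)) := min_le_right _ _
    have h2 : 0 < 6 * (2*x*(B+1) + 1) := by positivity
    rw [le_div_iff₀ h2] at h1
    nlinarith [mul_pos hx hεpos]
  have evA : ∀ᶠ t in atTop, Real.exp (-x) - δ/6 < (1 - p ((1/2)*t))^(nt t) :=
    (hpow (1/2) (by norm_num)).eventually (eventually_gt_nhds (by linarith))
  have evLow : ∀ᶠ t in atTop, (1 - p (1*t))^(nt t) < Real.exp (-x) + δ/2 :=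
    (hpow 1 one_pos).eventually (eventually_lt_nhds (by linarith))
  have hB2t : Tendsto (fun t => ((nt t : ℕ):ℝ) * (p (ε*t) - p ((1/2)*t))) atTop (𝓝 0) := by
    have := (hr ε hεpos).sub (hr (1/2) (by norm_num))
    rw [sub_self] at this
    apply this.congr' (Eventually.of_forall (fun t => by ring))
  have evB2 : ∀ᶠ t in atTop, ((nt t : ℕ):ℝ) * (p (ε*t) - p ((1/2)*t)) < δ/6 :=
    hB2t.eventually (eventually_lt_nhds (by linarith))
  have hεt : Tendsto (fun t : ℝ => ε * t) atTop atTop :=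
    Tendsto.const_mul_atTop hεpos tendsto_id
  have evB3 : ∀ᶠ t in atTop, ((nt t : ℕ):ℝ) * (∫ u in (0:ℝ)..(ε*t), p u) / t ≤ 2*x*B*ε := by
    have f4 : ∀ᶠ t in atTop, (1/2) * L t ≤ L (ε*t) := by
      filter_upwards [(hslow ε hεpos).eventually
        (eventually_ge_nhds (by norm_num : (1:ℝ)/2 < 1)), hLt] with t h1 h2
      rw [le_div_iff₀ h2] at h1
      linarith
    filter_upwards [eventually_gt_atTop 0, hεt.eventually (eventually_ge_atTop s₁),
      hLt, f4] with t ht hst hLt' hL4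
    have hI0 : 0 ≤ ∫ u in (0:ℝ)..(ε*t), p u :=
      intervalIntegral.integral_nonneg (by positivity) (fun u _ => hp0 u)
    have hkar := hKar (ε*t) hst
    have hnt : ((nt t : ℕ):ℝ) ≤ x * L t := Nat.floor_le (by positivity)
    rw [div_le_iff₀ ht]
    have h5 : ((nt t : ℕ):ℝ) * (∫ u in (0:ℝ)..(ε*t), p u)
        ≤ x * L t * (∫ u in (0:ℝ)..(ε*t), p u) :=
      mul_le_mul_of_nonneg_right hnt hI0
    have h6 : L t * (∫ u in (0:ℝ)..(ε*t), p u)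
        ≤ 2 * (L (ε*t) * (∫ u in (0:ℝ)..(ε*t), p u)) := by nlinarith
    have h7 : (2:ℝ) * (L (ε*t) * (∫ u in (0:ℝ)..(ε*t), p u)) ≤ 2 * (B * (ε*t)) := by
      linarith
    have h8 := mul_le_mul_of_nonneg_left (h6.trans h7) hx.le
    nlinarith [h5, h8]
  have evUpper : ∀ᶠ t in atTop, (P {ω | t < rwS ξ (nt t) ω}).toReal ≤
      (1 - (1 - p ((1/2)*t))^(nt t))
      + ((nt t : ℕ):ℝ) * (p (ε*t) - p ((1/2)*t))
      + ((nt t : ℕ):ℝ) * (∫ u in (0:ℝ)..(ε*t), p u) / t := by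
    filter_upwards [eventually_gt_atTop 0] with t ht
    have hεtpos : 0 < ε * t := by positivity
    have hab : ε * t ≤ (1/2) * t := by nlinarith
    exact upper_bound P ξ hmeas hindep hid hpos t (ε*t) ht hεtpos hab (nt t)
  filter_upwards [hdual, evA, evLow, evB2, evB3, evUpper] with t h0 h1 h2 h3 h4 h5
  have hG := hlow t
  rw [h0, Real.dist_eq, abs_sub_lt_iff]
  constructor
  · -- upper part
    have : (P {ω | t < rwS ξ (nt t) ω}).toReal < c₀ + δ/2 := by
      rw [hc₀]
      linarith
    linarith
  · -- lower part
    have h2' : (1 - p t)^(nt t) < Real.exp (-x) + δ/2 := by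
      have : (1:ℝ) * t = t := by ring
      rwa [this] at h2
    rw [hc₀]
    linarith
end
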